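/- The function D₀(x) = y − ln(1 + y), where y = 7/(324 x³(35x² + 33)), is strictly convex on the interval (1, ∞); equivalently, its second derivative with respect to x equals (343/54)(18191250x⁹ + 37110150x⁷ + 24992550x⁵ + 6125x⁴ + 5821794x³ + 6545x² + 2178) / (x⁵(35x² + 33)³(11340x⁵ + 10692x³ + 7)²), which is positive for x > 1. -/

import Mathlib

/-!
With `p x = 324 x³ (35 x² + 33)` and `y = 7 / p`, the chain rule applied to `y - log (1 + y)`
gives `D₀' = -49 p' / (p² (p + 7))`. Differentiating this quotient once more and clearing
denominators yields the stated closed form of `D₀''`, whose numerator and denominator are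
polynomials with positive coefficients, hence positive for `x > 0`.
-/

open Real

noncomputable def D₀ (x : ℝ) : ℝ :=
  7 / (324 * x ^ 3 * (35 * x ^ 2 + 33))
    - Real.log (1 + 7 / (324 * x ^ 3 * (35 * x ^ 2 + 33)))

theorem hasDerivAt_sub_log_one_add {y : ℝ} (hy : 1 + y ≠ 0) :
    HasDerivAt (fun y => y - log (1 + y)) (y / (1 + y)) y := by
  have := (hasDerivAt_id' y).sub (((hasDerivAt_id' y).const_add 1).log hy)
  refine this.congr_deriv ?_
  field_simp
  ring

theorem HasDerivAt.div_sub_log_one_add_div {p : ℝ → ℝ} {p' x c : ℝ} (hp : HasDerivAt p p' x)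
    (hpx : 0 < p x) (hc : 0 ≤ c) :
    HasDerivAt (fun x => c / p x - Real.log (1 + c / p x))
      (-(c ^ 2 * p') / (p x ^ 2 * (p x + c))) x := by
  have hy := (hasDerivAt_const x c).div hp hpx.ne'
  have := (hasDerivAt_sub_log_one_add (y := c / p x) (by positivity)).comp x hy
  refine this.congr_deriv ?_
  have : p x + c ≠ 0 := by positivity
  field_simp
  ring

noncomputable def denomD₀ (x : ℝ) : ℝ := 324 * x ^ 3 * (35 * x ^ 2 + 33)

theorem hasDerivAt_denomD₀ (x : ℝ) :
    HasDerivAt denomD₀ (56700 * x ^ 4 + 32076 * x ^ 2) x := by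
  have := ((hasDerivAt_pow 3 x).const_mul 324).mul
    (((hasDerivAt_pow 2 x).const_mul 35).add_const 33)
  refine this.congr_deriv ?_
  push_cast
  ring

theorem denomD₀_pos {x : ℝ} (hx : 0 < x) : 0 < denomD₀ x := by
  unfold denomD₀
  positivity

noncomputable def derivD₀ (x : ℝ) : ℝ :=
  -(7 ^ 2 * (56700 * x ^ 4 + 32076 * x ^ 2)) / (denomD₀ x ^ 2 * (denomD₀ x + 7))

theorem hasDerivAt_D₀ {x : ℝ} (hx : 0 < x) : HasDerivAt D₀ (derivD₀ x) x :=
  (hasDerivAt_denomD₀ x).div_sub_log_one_add_div (denomD₀_pos hx) (by norm_num)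

noncomputable def deriv2D₀ (x : ℝ) : ℝ :=
  343 / 54 *
    ((18191250 * x ^ 9 + 37110150 * x ^ 7 + 24992550 * x ^ 5 + 6125 * x ^ 4
      + 5821794 * x ^ 3 + 6545 * x ^ 2 + 2178) /
     (x ^ 5 * (35 * x ^ 2 + 33) ^ 3 * (11340 * x ^ 5 + 10692 * x ^ 3 + 7) ^ 2))

theorem deriv2D₀_pos {x : ℝ} (hx : 0 < x) : 0 < deriv2D₀ x := by
  unfold deriv2D₀
  positivity

theorem hasDerivAt_derivD₀ {x : ℝ} (hx : 0 < x) : HasDerivAt derivD₀ (deriv2D₀ x) x := by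
  have hnum : HasDerivAt (fun x => -(7 ^ 2 * (56700 * x ^ 4 + 32076 * x ^ 2)))
      (-(7 ^ 2 * (226800 * x ^ 3 + 64152 * x))) x := by
    have := (((hasDerivAt_pow 4 x).const_mul 56700).add
      ((hasDerivAt_pow 2 x).const_mul 32076)).const_mul (7 ^ 2 : ℝ) |>.neg
    refine this.congr_deriv ?_
    push_cast
    ring
  have hp := hasDerivAt_denomD₀ x
  have hpx := denomD₀_pos hx
  refine (hnum.div ((hp.fun_pow 2).fun_mul (hp.add_const 7)) (by positivity)).congr_deriv ?_
  unfold deriv2D₀ denomD₀ at *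
  have : 0 < 11340 * x ^ 5 + 10692 * x ^ 3 + 7 := by positivity
  push_cast
  field_simp
  ring

theorem deriv_deriv_D₀ {x : ℝ} (hx : 0 < x) : deriv (deriv D₀) x = deriv2D₀ x := by
  have hderiv : deriv D₀ =ᶠ[nhds x] derivD₀ := by
    filter_upwards [Ioi_mem_nhds hx] with z hz
    exact (hasDerivAt_D₀ hz).deriv
  rw [hderiv.deriv_eq, (hasDerivAt_derivD₀ hx).deriv]

theorem D₀_strictly_convex :
    StrictConvexOn ℝ (Set.Ioi (1 : ℝ)) D₀ ∧
    ∀ x : ℝ, 1 < x →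
      deriv (deriv D₀) x = 343 / 54 *
        ((18191250 * x ^ 9 + 37110150 * x ^ 7 + 24992550 * x ^ 5 + 6125 * x ^ 4
          + 5821794 * x ^ 3 + 6545 * x ^ 2 + 2178) /
         (x ^ 5 * (35 * x ^ 2 + 33) ^ 3 * (11340 * x ^ 5 + 10692 * x ^ 3 + 7) ^ 2)) ∧
      0 < deriv (deriv D₀) x := by
  have deriv2_pos : ∀ x ∈ Set.Ioi (1 : ℝ), 0 < deriv (deriv D₀) x := fun x hx => by
    rw [deriv_deriv_D₀ (one_pos.trans hx)]
    exact deriv2D₀_pos (one_pos.trans hx)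
  refine ⟨strictConvexOn_of_deriv2_pos' (convex_Ioi 1) ?_ deriv2_pos,
    fun x hx => ⟨deriv_deriv_D₀ (one_pos.trans hx), deriv2_pos x hx⟩⟩
  exact fun x hx => (hasDerivAt_D₀ (one_pos.trans hx)).continuousAt.continuousWithinAt
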